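/- arXiv:2402.06903 — 2 statements merged into one kernel-verified Lean document; each statement's English description precedes it below -/
import Mathlib

section
/- Let E and F be real inner product spaces, ι and κ index types, K : ι → (E →L[ℝ] F) a family of continuous linear maps, J J' : Finset ι, S : ι → Finset κ with S j nonempty for every j ∈ J, e : ι → κ → E, x : ι → E, and W ≥ 0 with ‖x j‖ ≤ W for every j ∈ J'. Then ‖∑_{j ∈ J} (K j) (((S j).card : ℝ)⁻¹ • ∑_{p ∈ S j} e j p) + ∑_{j ∈ J'} (K j) (x j)‖ ≤ √(∑_{j ∈ J} ‖K j‖²) · √(∑_{j ∈ J} ∑_{p ∈ S j} ‖e j p‖²) + √(∑_{j ∈ J'} ‖K j‖²) · √((J').card) · W. -/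
open Finset

lemma cs_sum_le {ι : Type*} (s : Finset ι) (f g : ι → ℝ) :
    ∑ i ∈ s, f i * g i ≤
      Real.sqrt (∑ i ∈ s, f i ^ 2) * Real.sqrt (∑ i ∈ s, g i ^ 2) := by
  have h := Finset.sum_mul_sq_le_sq_mul_sq s f g
  calc ∑ i ∈ s, f i * g i ≤ Real.sqrt ((∑ i ∈ s, f i * g i) ^ 2) := by
        rw [Real.sqrt_sq_eq_abs]; exact le_abs_self _
    _ ≤ Real.sqrt ((∑ i ∈ s, f i ^ 2) * ∑ i ∈ s, g i ^ 2) := Real.sqrt_le_sqrt h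
    _ = _ := Real.sqrt_mul (Finset.sum_nonneg fun i _ => sq_nonneg _) _

/-- Static core of Lemma 3 of the paper: the mismatch between the truncated
feedback law on an agent (fused estimates over `J`, truncated true states over `J'`)
and the exact state-feedback law splits into an estimation-error term and a
model-mismatch term bounded via `W`. -/
theorem norm_sum_apply_average_add_truncation_le {E F : Type*}
    [NormedAddCommGroup E] [InnerProductSpace ℝ E]
    [NormedAddCommGroup F] [InnerProductSpace ℝ F]
    {ι κ : Type*} (K : ι → (E →L[ℝ] F)) (J J' : Finset ι) (S : ι → Finset κ)
    (hS : ∀ j ∈ J, (S j).Nonempty) (e : ι → κ → E) (x : ι → E) (W : ℝ)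
    (hW : 0 ≤ W) (hx : ∀ j ∈ J', ‖x j‖ ≤ W) :
    ‖(∑ j ∈ J, (K j) (((S j).card : ℝ)⁻¹ • ∑ p ∈ S j, e j p))
        + ∑ j ∈ J', (K j) (x j)‖
      ≤ Real.sqrt (∑ j ∈ J, ‖K j‖ ^ 2) *
          Real.sqrt (∑ j ∈ J, ∑ p ∈ S j, ‖e j p‖ ^ 2)
        + Real.sqrt (∑ j ∈ J', ‖K j‖ ^ 2) * Real.sqrt ((J'.card : ℝ)) * W := by
  have h1 : ‖∑ j ∈ J, (K j) (((S j).card : ℝ)⁻¹ • ∑ p ∈ S j, e j p)‖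
      ≤ Real.sqrt (∑ j ∈ J, ‖K j‖ ^ 2) *
        Real.sqrt (∑ j ∈ J, ∑ p ∈ S j, ‖e j p‖ ^ 2) := by
    calc ‖∑ j ∈ J, (K j) (((S j).card : ℝ)⁻¹ • ∑ p ∈ S j, e j p)‖
        ≤ ∑ j ∈ J, ‖(K j) (((S j).card : ℝ)⁻¹ • ∑ p ∈ S j, e j p)‖ :=
          norm_sum_le _ _
      _ ≤ ∑ j ∈ J, ‖K j‖ * ‖((S j).card : ℝ)⁻¹ • ∑ p ∈ S j, e j p‖ :=
          Finset.sum_le_sum fun j _ => (K j).le_opNorm _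
      _ ≤ Real.sqrt (∑ j ∈ J, ‖K j‖ ^ 2) *
          Real.sqrt (∑ j ∈ J, ‖((S j).card : ℝ)⁻¹ • ∑ p ∈ S j, e j p‖ ^ 2) :=
          cs_sum_le _ _ _
      _ ≤ Real.sqrt (∑ j ∈ J, ‖K j‖ ^ 2) *
          Real.sqrt (∑ j ∈ J, ∑ p ∈ S j, ‖e j p‖ ^ 2) := by
          gcongr with j hj
          have hn : (0 : ℝ) < (S j).card := by
            exact_mod_cast Finset.card_pos.mpr (hS j hj)
          have havg : ‖((S j).card : ℝ)⁻¹ • ∑ p ∈ S j, e j p‖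
              ≤ ((S j).card : ℝ)⁻¹ * ∑ p ∈ S j, ‖e j p‖ := by
            rw [norm_smul, Real.norm_eq_abs, abs_inv, abs_of_pos hn]
            gcongr
            exact norm_sum_le _ _
          have hcs : (∑ p ∈ S j, ‖e j p‖) ^ 2
              ≤ ((S j).card : ℝ) * ∑ p ∈ S j, ‖e j p‖ ^ 2 := by
            have := Finset.sum_mul_sq_le_sq_mul_sq (S j) (fun _ => 1)
              (fun p => ‖e j p‖)
            simpa using this
          calc ‖((S j).card : ℝ)⁻¹ • ∑ p ∈ S j, e j p‖ ^ 2
              ≤ (((S j).card : ℝ)⁻¹ * ∑ p ∈ S j, ‖e j p‖) ^ 2 := by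
                gcongr

            _ = ((S j).card : ℝ)⁻¹ ^ 2 * (∑ p ∈ S j, ‖e j p‖) ^ 2 := by ring
            _ ≤ ((S j).card : ℝ)⁻¹ ^ 2 *
                (((S j).card : ℝ) * ∑ p ∈ S j, ‖e j p‖ ^ 2) := by
                gcongr
            _ = ((S j).card : ℝ)⁻¹ * ∑ p ∈ S j, ‖e j p‖ ^ 2 := by
                field_simp
            _ ≤ 1 * ∑ p ∈ S j, ‖e j p‖ ^ 2 :=
                mul_le_mul_of_nonneg_right
                  (inv_le_one_of_one_le₀ (by exact_mod_cast hn))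
                  (by positivity)
            _ = ∑ p ∈ S j, ‖e j p‖ ^ 2 := one_mul _
  have h2 : ‖∑ j ∈ J', (K j) (x j)‖
      ≤ Real.sqrt (∑ j ∈ J', ‖K j‖ ^ 2) * Real.sqrt ((J'.card : ℝ)) * W := by
    calc ‖∑ j ∈ J', (K j) (x j)‖ ≤ ∑ j ∈ J', ‖(K j) (x j)‖ := norm_sum_le _ _
      _ ≤ ∑ j ∈ J', ‖K j‖ * ‖x j‖ :=
          Finset.sum_le_sum fun j _ => (K j).le_opNorm _
      _ ≤ Real.sqrt (∑ j ∈ J', ‖K j‖ ^ 2) * Real.sqrt (∑ j ∈ J', ‖x j‖ ^ 2) :=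
          cs_sum_le _ _ _
      _ ≤ Real.sqrt (∑ j ∈ J', ‖K j‖ ^ 2) * Real.sqrt (∑ j ∈ J', W ^ 2) := by
          gcongr with j hj
          exact hx j hj
      _ = Real.sqrt (∑ j ∈ J', ‖K j‖ ^ 2) * Real.sqrt ((J'.card : ℝ)) * W := by
          rw [Finset.sum_const, nsmul_eq_mul, Real.sqrt_mul (by positivity),
            Real.sqrt_sq hW, mul_assoc]
  calc ‖_ + _‖ ≤ _ + _ := norm_add_le _ _
    _ ≤ _ := add_le_add h1 h2
end

section
/- Let d be a natural number, M Q : Matrix (Fin d) (Fin d) ℝ with Q symmetric (Qᵀ = Q), let c₂ > 0 and δ ≥ 0 be reals with Q * M + Mᵀ * Q = −c₂ • (1 : Matrix (Fin d) (Fin d) ℝ), let x g : ℝ → (Fin d → ℝ) and t : ℝ with HasDerivAt x (M.mulVec (x t) + g t) t and √(∑ᵢ (g t i)²) ≤ δ. Then the derivative at t of the function W : s ↦ (x s) ⬝ᵥ (Q.mulVec (x s)) is at most −c₂ · (∑ᵢ (x t i)²) + 2 · δ · ‖Q‖ · √(∑ᵢ (x t i)²), where ‖Q‖ is the ℓ²→ℓ²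 operator norm of Q; in particular, if √(∑ᵢ (x t i)²) > 2δ‖Q‖/c₂ then this derivative is negative. -/
open Matrix

/-- The ℓ²→ℓ² operator norm of a real square matrix. -/
noncomputable def l2OpNorm {d : ℕ} (Q : Matrix (Fin d) (Fin d) ℝ) : ℝ :=
  ‖Matrix.toEuclideanCLM (𝕜 := ℝ) Q‖

/-! Along `ẋ = Mx + g` the derivative of `xᵀQx` is `xᵀ(QM + MᵀQ)x + 2 xᵀQg`; the Lyapunov
equation turns the first term into `-c₂‖x‖²`, and Cauchy–Schwarz with the operator norm bounds
the cross term by `2‖Q‖δ‖x‖`. -/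

section

variable {n : Type*} [Fintype n]

section Deriv

variable {𝕜 : Type*} [NontriviallyNormedField 𝕜] {u w : 𝕜 → n → 𝕜} {u' w' : n → 𝕜} {t : 𝕜}

theorem HasDerivAt.dotProduct (hu : HasDerivAt u u' t) (hw : HasDerivAt w w' t) :
    HasDerivAt (fun s => u s ⬝ᵥ w s) (u' ⬝ᵥ w t + u t ⬝ᵥ w') t :=
  (HasDerivAt.fun_sum fun i _ =>
    (hasDerivAt_pi.mp hu i).fun_mul (hasDerivAt_pi.mp hw i)).congr_deriv Finset.sum_add_distrib

theorem HasDerivAt.mulVec {m : Type*} (A : Matrix m n 𝕜) (hw : HasDerivAt w w' t) :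
    HasDerivAt (fun s => A *ᵥ w s) (A *ᵥ w') t :=
  hasDerivAt_pi.mpr fun i =>
    ((hasDerivAt_const t (A i)).dotProduct hw).congr_deriv
      (by rw [zero_dotProduct, zero_add]; rfl)

end Deriv

theorem Matrix.IsSymm.dotProduct_mulVec_comm {R : Type*} [CommSemiring R] {Q : Matrix n n R}
    (hQ : Q.IsSymm) (u w : n → R) : u ⬝ᵥ Q *ᵥ w = w ⬝ᵥ Q *ᵥ u := by
  rw [dotProduct_mulVec, ← mulVec_transpose, hQ.eq, dotProduct_comm]

theorem Matrix.IsSymm.dotProduct_mulVec_affine {R : Type*} [CommSemiring R] {Q : Matrix n n R}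
    (hQ : Q.IsSymm) (M : Matrix n n R) (u v : n → R) :
    (M *ᵥ u + v) ⬝ᵥ Q *ᵥ u + u ⬝ᵥ Q *ᵥ (M *ᵥ u + v)
      = u ⬝ᵥ (Q * M + Mᵀ * Q) *ᵥ u + 2 * (u ⬝ᵥ Q *ᵥ v) := by
  have hM : (M *ᵥ u) ⬝ᵥ Q *ᵥ u = u ⬝ᵥ (Mᵀ * Q) *ᵥ u := by
    rw [← mulVec_mulVec, dotProduct_mulVec u, vecMul_transpose]
  rw [add_dotProduct, mulVec_add, dotProduct_add, add_mulVec, dotProduct_add, hM,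
    hQ.dotProduct_mulVec_comm v u, mulVec_mulVec]
  ring

theorem EuclideanSpace.norm_toLp_real (u : n → ℝ) : ‖WithLp.toLp 2 u‖ = √(∑ i, u i ^ 2) := by
  simp [EuclideanSpace.norm_eq]

theorem Matrix.dotProduct_mulVec_le_norm_toEuclideanCLM [DecidableEq n] (A : Matrix n n ℝ)
    (u w : n → ℝ) :
    u ⬝ᵥ A *ᵥ w
      ≤ ‖WithLp.toLp 2 u‖ * ‖toEuclideanCLM (𝕜 := ℝ) A‖ * ‖WithLp.toLp 2 w‖ :=
  calc u ⬝ᵥ A *ᵥ w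
        = inner ℝ (WithLp.toLp 2 u) (toEuclideanCLM (𝕜 := ℝ) A (WithLp.toLp 2 w)) := by
        rw [toEuclideanCLM_toLp, EuclideanSpace.inner_toLp_toLp, star_trivial, dotProduct_comm]
    _ ≤ ‖WithLp.toLp 2 u‖ * ‖toEuclideanCLM (𝕜 := ℝ) A (WithLp.toLp 2 w)‖ :=
        real_inner_le_norm _ _
    _ ≤ ‖WithLp.toLp 2 u‖ * (‖toEuclideanCLM (𝕜 := ℝ) A‖ * ‖WithLp.toLp 2 w‖) := by
        gcongr; exact ContinuousLinearMap.le_opNorm _ _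
    _ = _ := (mul_assoc _ _ _).symm

end

theorem neg_mul_sq_add_mul_neg {c a r : ℝ} (hc : 0 < c) (ha : 0 ≤ a) (hr : a / c < r) :
    -c * r ^ 2 + a * r < 0 := by
  have hr₀ : 0 < r := (div_nonneg ha hc.le).trans_lt hr
  have hcr : a < c * r := (div_lt_iff₀' hc).mp hr
  nlinarith

theorem lyapunov_dissipation_general (d : ℕ)
    (M Q : Matrix (Fin d) (Fin d) ℝ) (hQ : Qᵀ = Q)
    (c₂ δ : ℝ) (hc₂ : 0 < c₂)
    (hLyap : Q * M + Mᵀ * Q = (-c₂) • (1 : Matrix (Fin d) (Fin d) ℝ))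
    (x g : ℝ → (Fin d → ℝ)) (t : ℝ)
    (hx : HasDerivAt x (M.mulVec (x t) + g t) t)
    (hg : Real.sqrt (∑ i, (g t i) ^ 2) ≤ δ) :
    deriv (fun s => (x s) ⬝ᵥ (Q.mulVec (x s))) t
        ≤ -c₂ * (∑ i, (x t i) ^ 2)
          + 2 * δ * l2OpNorm Q * Real.sqrt (∑ i, (x t i) ^ 2)
      ∧ (Real.sqrt (∑ i, (x t i) ^ 2) > 2 * δ * l2OpNorm Q / c₂ →
          deriv (fun s => (x s) ⬝ᵥ (Q.mulVec (x s))) t < 0) := by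
  have hW : deriv (fun s => x s ⬝ᵥ Q *ᵥ x s) t
      = -c₂ * ∑ i, x t i ^ 2 + 2 * (x t ⬝ᵥ Q *ᵥ g t) := by
    rw [(hx.dotProduct (hx.mulVec Q)).deriv, Matrix.IsSymm.dotProduct_mulVec_affine hQ, hLyap,
      smul_mulVec, one_mulVec, dotProduct_smul, smul_eq_mul]
    simp only [dotProduct, sq]
  have hcross : x t ⬝ᵥ Q *ᵥ g t ≤ √(∑ i, x t i ^ 2) * l2OpNorm Q * δ := by
    grw [Matrix.dotProduct_mulVec_le_norm_toEuclideanCLM, EuclideanSpace.norm_toLp_real,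
      EuclideanSpace.norm_toLp_real, hg]
    rfl
  have hbound : deriv (fun s => x s ⬝ᵥ Q *ᵥ x s) t
      ≤ -c₂ * ∑ i, x t i ^ 2 + 2 * δ * l2OpNorm Q * √(∑ i, x t i ^ 2) := by
    rw [hW]; linarith
  refine ⟨hbound, fun hr => hbound.trans_lt ?_⟩
  have hδ : 0 ≤ δ := (Real.sqrt_nonneg _).trans hg
  have h := neg_mul_sq_add_mul_neg hc₂ (by unfold l2OpNorm; positivity) hr
  rwa [Real.sq_sqrt (by positivity)] at h

/-- Dissipation inequality in the proof of Theorem 2 of the paper: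
if `QM + MᵀQ = −c₂ I` and `‖g t‖ ≤ δ`, then along `ẋ = Mx + g` the derivative
of `W = xᵀQx` is at most `−c₂‖x‖² + 2δ‖Q‖‖x‖`; in particular it is negative
whenever `‖x t‖ > 2δ‖Q‖/c₂`. -/
theorem lyapunov_dissipation (d : ℕ)
    (M Q : Matrix (Fin d) (Fin d) ℝ) (hQ : Qᵀ = Q)
    (c₂ δ : ℝ) (hc₂ : 0 < c₂) (hδ : 0 ≤ δ)
    (hLyap : Q * M + Mᵀ * Q = (-c₂) • (1 : Matrix (Fin d) (Fin d) ℝ))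
    (x g : ℝ → (Fin d → ℝ)) (t : ℝ)
    (hx : HasDerivAt x (M.mulVec (x t) + g t) t)
    (hg : Real.sqrt (∑ i, (g t i) ^ 2) ≤ δ) :
    deriv (fun s => (x s) ⬝ᵥ (Q.mulVec (x s))) t
        ≤ -c₂ * (∑ i, (x t i) ^ 2)
          + 2 * δ * l2OpNorm Q * Real.sqrt (∑ i, (x t i) ^ 2)
      ∧ (Real.sqrt (∑ i, (x t i) ^ 2) > 2 * δ * l2OpNorm Q / c₂ →
          deriv (fun s => (x s) ⬝ᵥ (Q.mulVec (x s))) t < 0) :=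
  lyapunov_dissipation_general d M Q hQ c₂ δ hc₂ hLyap x g t hx hg
end
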